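/- Let f: ℝᵈ → ℝ be convex and differentiable, C ⊆ ℝᵈ convex, and x★ a minimizer over C of F(x) := f(x) + η⁻¹D(x,x') where D is a Bregman divergence generated by a differentiable convex φ and η > 0. Then for every x ∈ C: f(x★) + η⁻¹D(x★,x') ≤ f(x) + η⁻¹(D(x,x') − D(x,x★)). -/

import Mathlib

open scoped RealInnerProductSpace

/-- Bregman divergence induced by `φ` with gradient map `φ'`. -/
noncomputable def bregmanDiv' {d : ℕ}
    (φ : EuclideanSpace ℝ (Fin d) → ℝ) (φ' : EuclideanSpace ℝ (Fin d) → EuclideanSpace ℝ (Fin d))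
    (u v : EuclideanSpace ℝ (Fin d)) : ℝ :=
  φ u - φ v - ⟪φ' v, u - v⟫

/-!
Compare `x★` with the points `x★ + t (x - x★)` of `C`: convexity of `f` bounds the change of `f`
by `t (f x - f x★)`, and letting `t → 0⁺` leaves `f x★ ≤ f x + η⁻¹ ⟪∇φ x★ - ∇φ x', x - x★⟫`,
where `∇φ x★ - ∇φ x'` is the gradient of `D(·, x')` at `x★`. The three-point identity rewrites
this inner product as `D(x,x') - D(x,x★) - D(x★,x')`.
-/

open Filter Set Topology

theorem ConvexOn.le_add_of_isMinOn_add {E : Type*} [NormedAddCommGroup E] [NormedSpace ℝ E]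
    {C : Set E} {g h : E → ℝ} {L : E →L[ℝ] ℝ} {a x : E} (hg : ConvexOn ℝ C g)
    (hh : HasFDerivAt h L a) (hmin : IsMinOn (g + h) C a) (ha : a ∈ C) (hx : x ∈ C) :
    g a ≤ g x + L (x - a) := by
  have hslope : ∀ t ∈ Ioc (0 : ℝ) 1, g a - g x ≤ t⁻¹ • (h (a + t • (x - a)) - h a) := by
    rintro t ⟨ht₀, ht₁⟩
    have hseg : a + t • (x - a) = (1 - t) • a + t • x := by module
    have hconv : g (a + t • (x - a)) ≤ (1 - t) * g a + t * g x := by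
      rw [hseg]
      exact hg.2 ha hx (by linarith) ht₀.le (by ring)
    have hle : g a + h a ≤ g (a + t • (x - a)) + h (a + t • (x - a)) :=
      hmin (hseg ▸ hg.1 ha hx (by linarith) ht₀.le (by ring))
    rw [smul_eq_mul, le_inv_mul_iff₀ ht₀]
    linarith
  have hlim := (hh.hasLineDerivAt (x - a)).tendsto_slope_zero_right
  have hL : g a - g x ≤ L (x - a) :=
    ge_of_tendsto hlim (by filter_upwards [Ioc_mem_nhdsGT one_pos] using hslope)
  linarith

theorem bregmanDiv'_three_point {d : ℕ}
    (φ : EuclideanSpace ℝ (Fin d) → ℝ) (φ' : EuclideanSpace ℝ (Fin d) → EuclideanSpace ℝ (Fin d))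
    (x y z : EuclideanSpace ℝ (Fin d)) :
    bregmanDiv' φ φ' x z - bregmanDiv' φ φ' x y - bregmanDiv' φ φ' y z =
      ⟪φ' y - φ' z, x - y⟫ := by
  have hsplit : x - z = (x - y) + (y - z) := by abel
  simp only [bregmanDiv', hsplit, inner_add_right, inner_sub_left]
  ring

theorem hasGradientAt_bregmanDiv'_left {d : ℕ}
    {φ : EuclideanSpace ℝ (Fin d) → ℝ} {φ' : EuclideanSpace ℝ (Fin d) → EuclideanSpace ℝ (Fin d)}
    {v : EuclideanSpace ℝ (Fin d)} (hφ : HasGradientAt φ (φ' v) v) (w : EuclideanSpace ℝ (Fin d)) :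
    HasGradientAt (fun u => bregmanDiv' φ φ' u w) (φ' v - φ' w) v := by
  rw [hasGradientAt_iff_hasFDerivAt, map_sub]
  have hlin : HasFDerivAt (fun u => ⟪φ' w, u - w⟫)
      (InnerProductSpace.toDual ℝ _ (φ' w) : _ →L[ℝ] ℝ) v :=
    (innerSL ℝ (φ' w)).hasFDerivAt.comp v ((hasFDerivAt_id v).sub_const w)
  exact (hφ.hasFDerivAt.sub_const (φ w)).sub hlin

theorem stmt_5_general {d : ℕ}
    (f : EuclideanSpace ℝ (Fin d) → ℝ)
    (hfc : ConvexOn ℝ Set.univ f)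
    (C : Set (EuclideanSpace ℝ (Fin d))) (hC : Convex ℝ C)
    (φ : EuclideanSpace ℝ (Fin d) → ℝ)
    (φ' : EuclideanSpace ℝ (Fin d) → EuclideanSpace ℝ (Fin d))
    (hφ' : ∀ v, HasGradientAt φ (φ' v) v)
    (η : ℝ)
    (x' xs : EuclideanSpace ℝ (Fin d)) (hxsC : xs ∈ C)
    (hmin : ∀ x ∈ C, f xs + η⁻¹ * bregmanDiv' φ φ' xs x'
        ≤ f x + η⁻¹ * bregmanDiv' φ φ' x x') :
    ∀ x ∈ C, f xs + η⁻¹ * bregmanDiv' φ φ' xs x'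
        ≤ f x + η⁻¹ * (bregmanDiv' φ φ' x x' - bregmanDiv' φ φ' x xs) := by
  intro x hxC
  have hD := ((hasGradientAt_bregmanDiv'_left (hφ' xs) x').hasFDerivAt).const_mul η⁻¹
  have hopt := (hfc.subset (subset_univ C) hC).le_add_of_isMinOn_add hD hmin hxsC hxC
  simp only [smul_apply, InnerProductSpace.toDual_apply_apply, smul_eq_mul] at hopt
  rw [← bregmanDiv'_three_point φ φ' x xs x'] at hopt
  linarith

/-- Single-player pushback lemma for mirror descent: if `x★` minimizes
`f(x) + η⁻¹ D(x,x')` over a convex set `C`, then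
`f(x★) + η⁻¹ D(x★,x') ≤ f(x) + η⁻¹ (D(x,x') − D(x,x★))` for all `x ∈ C`. -/
theorem stmt_5 {d : ℕ}
    (f : EuclideanSpace ℝ (Fin d) → ℝ)
    (hfc : ConvexOn ℝ Set.univ f) (hfd : Differentiable ℝ f)
    (C : Set (EuclideanSpace ℝ (Fin d))) (hC : Convex ℝ C)
    (φ : EuclideanSpace ℝ (Fin d) → ℝ)
    (φ' : EuclideanSpace ℝ (Fin d) → EuclideanSpace ℝ (Fin d))
    (hφc : ConvexOn ℝ Set.univ φ)
    (hφ' : ∀ v, HasGradientAt φ (φ' v) v)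
    (η : ℝ) (hη : 0 < η)
    (x' xs : EuclideanSpace ℝ (Fin d)) (hxsC : xs ∈ C)
    (hmin : ∀ x ∈ C, f xs + η⁻¹ * bregmanDiv' φ φ' xs x'
        ≤ f x + η⁻¹ * bregmanDiv' φ φ' x x') :
    ∀ x ∈ C, f xs + η⁻¹ * bregmanDiv' φ φ' xs x'
        ≤ f x + η⁻¹ * (bregmanDiv' φ φ' x x' - bregmanDiv' φ φ' x xs) :=
  stmt_5_general f hfc C hC φ φ' hφ' η x' xs hxsC hmin
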